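/- Let n ≥ 2, k ≥ 1, and let c : Fin n → ((Fin n → Fin k) → ℝ) be the payoff functions of an n-player finite game in which every player has strategy set Fin k. Write ⊤ for the last strategy k−1 : Fin k and let ℓ = n−1 : Fin n be the last player. The game is potential if and only if both of the following hold: (a) for every player i ≠ ℓ, every profile s : Fin n → Fin k, and all x, y : Fin k, writing d t = c ℓ t − c i t, one has d (update (update s i x) ℓ y) − d (update (update s i x) ℓ ⊤) − d (update (update s i ⊤) ℓ y) + d (update (update s i ⊤) ℓ ⊤) = 0; and (b) there exists ξ : (Fin n → Fin k) → ℝ such that for every player i ≠ ℓ, every profile s with s ℓ = ⊤, and all x, y : Fin k, writing d t = c ℓ t − c i t, one has ξ (update s i x) − ξ (update s i y) = d (update s i x) − d (update s i y). -/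
import Mathlib


/-- An `n`-player finite game with payoff functions `c` (each player has strategy
set `Fin k`) is potential if it admits a potential function `p`. -/
def IsPotentialGame {n k : ℕ} (c : Fin n → (Fin n → Fin k) → ℝ) : Prop :=
  ∃ p : (Fin n → Fin k) → ℝ,
    ∀ (i : Fin n) (s : Fin n → Fin k) (x y : Fin k),
      c i (Function.update s i x) - c i (Function.update s i y) =
        p (Function.update s i x) - p (Function.update s i y)

/-- The four-cycle expression
`d(s[i:=x][j:=y]) - d(s[i:=x][j:=⊤]) - d(s[i:=⊤][j:=y]) + d(s[i:=⊤][j:=⊤])`. -/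
def cycleSum {n k : ℕ} (d : (Fin n → Fin k) → ℝ) (i j : Fin n) (top : Fin k)
    (s : Fin n → Fin k) (x y : Fin k) : ℝ :=
  d (Function.update (Function.update s i x) j y)
    - d (Function.update (Function.update s i x) j top)
    - d (Function.update (Function.update s i top) j y)
    + d (Function.update (Function.update s i top) j top)

theorem stmt17 (n k : ℕ) (hn : 2 ≤ n) (hk : 1 ≤ k)
    (c : Fin n → (Fin n → Fin k) → ℝ)
    (top : Fin k) (htop : (top : ℕ) = k - 1)
    (lst : Fin n) (hlst : (lst : ℕ) = n - 1) :
    IsPotentialGame c ↔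
      ((∀ i : Fin n, i ≠ lst → ∀ (s : Fin n → Fin k) (x y : Fin k),
          cycleSum (fun t => c lst t - c i t) i lst top s x y = 0) ∧
        (∃ ξ : (Fin n → Fin k) → ℝ,
          ∀ i : Fin n, i ≠ lst → ∀ s : Fin n → Fin k, s lst = top → ∀ x y : Fin k,
            ξ (Function.update s i x) - ξ (Function.update s i y) =
              (c lst (Function.update s i x) - c i (Function.update s i x))
                - (c lst (Function.update s i y) - c i (Function.update s i y)))) := by
  constructor
  · rintro ⟨p, hp⟩
    constructor
    · intro i hi s x y
      unfold cycleSum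
      have hc : ∀ a b : Fin k, Function.update (Function.update s i a) lst b
          = Function.update (Function.update s lst b) i a := fun a b =>
        Function.update_comm hi a b s
      have h1 := hp lst (Function.update s i x) y top
      have h2 := hp lst (Function.update s i top) y top
      have h3 := hp i (Function.update s lst y) x top
      have h4 := hp i (Function.update s lst top) x top
      rw [hc x y, hc x top] at h1
      rw [hc top y, hc top top] at h2
      rw [hc x y, hc top y, hc x top, hc top top]
      dsimp only
      linarith
    · refine ⟨fun t => c lst t - p t, fun i hi s hs x y => ?_⟩
      have := hp i s x y
      dsimp only
      linarith
  · rintro ⟨ha, ξ, hξ⟩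
    refine ⟨fun t => c lst t - ξ (Function.update t lst top), fun i s x y => ?_⟩
    by_cases hi : i = lst
    · subst hi
      simp only [Function.update_idem]
      ring
    · have hc : ∀ a b : Fin k, Function.update (Function.update s i a) lst b
          = Function.update (Function.update s lst b) i a := fun a b =>
        Function.update_comm hi a b s
      have key : ∀ z : Fin k,
          (c lst (Function.update s i z) - c i (Function.update s i z))
            - (c lst (Function.update (Function.update s i z) lst top)
              - c i (Function.update (Function.update s i z) lst top))
          = (c lst (Function.update s i top) - c i (Function.update s i top))
            - (c lst (Function.update (Function.update s i top) lst top)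
              - c i (Function.update (Function.update s i top) lst top)) := by
        intro z
        have h := ha i hi s z (s lst)
        unfold cycleSum at h
        have e1 : Function.update (Function.update s i z) lst (s lst)
            = Function.update s i z := by
          rw [show s lst = (Function.update s i z) lst from
            (Function.update_of_ne (Ne.symm hi) z s).symm, Function.update_eq_self]
        have e2 : Function.update (Function.update s i top) lst (s lst)
            = Function.update s i top := by
          rw [show s lst = (Function.update s i top) lst from
            (Function.update_of_ne (Ne.symm hi) top s).symm, Function.update_eq_self]
        rw [e1, e2] at h
        dsimp only at h
        linarith
      have hb := hξ i hi (Function.update s lst top)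
        (Function.update_self lst top s) x y
      rw [← hc x top, ← hc y top] at hb
      have k1 := key x
      have k2 := key y
      dsimp only
      linarith
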